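/- arXiv:2512.24234 — 2 statements merged into one kernel-verified Lean document; each statement's English description precedes it below -/
import Mathlib

section
/- Let ρ, R₀ > 0 with R₀ < (2/√3)ρ, and let {x_i}_{i≥1} ⊂ ℝ^N be points with |x_i - x_j| > 2ρ for i ≠ j. If u_i : ℝ^N → ℝ are functions with supp u_i ⊆ B̄(x_i, R₀), then at every point x ∈ ℝ^N, at most two of the values u_i(x) are nonzero; hence Σ_i u_i(x) equals u_{i_x}(x) + u_{j_x}(x) for some indices i_x, j_x (possibly with one term). -/
open RealInnerProductSpace in
lemma three_pt_aux {E : Type*} [NormedAddCommGroup E] [InnerProductSpace ℝ E]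
    (u v w : E) :
    ‖u - v‖ ^ 2 + ‖v - w‖ ^ 2 + ‖u - w‖ ^ 2 ≤ 3 * (‖u‖ ^ 2 + ‖v‖ ^ 2 + ‖w‖ ^ 2) := by
  have h0 : (0:ℝ) ≤ ‖u + v + w‖ ^ 2 := sq_nonneg _
  have h1 : ‖u + v + w‖ ^ 2 = ‖u‖^2 + ‖v‖^2 + ‖w‖^2 + 2*(⟪u,v⟫ + ⟪u,w⟫ + ⟪v,w⟫) := by
    rw [norm_add_sq_real, norm_add_sq_real, inner_add_left]; ring
  have h2 : ‖u - v‖ ^ 2 = ‖u‖^2 - 2*⟪u,v⟫ + ‖v‖^2 := norm_sub_sq_real u v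
  have h3 : ‖v - w‖ ^ 2 = ‖v‖^2 - 2*⟪v,w⟫ + ‖w‖^2 := norm_sub_sq_real v w
  have h4 : ‖u - w‖ ^ 2 = ‖u‖^2 - 2*⟪u,w⟫ + ‖w‖^2 := norm_sub_sq_real u w
  nlinarith [h0, h1, h2, h3, h4]

theorem stmt_3 (N : ℕ) (hN : 2 ≤ N) (ρ R₀ : ℝ) (hρ : 0 < ρ)
    (hlt : R₀ < 2 / Real.sqrt 3 * ρ)
    (x : ℕ → EuclideanSpace ℝ (Fin N))
    (hsep : ∀ i j, i ≠ j → 2 * ρ < dist (x i) (x j))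
    (u : ℕ → EuclideanSpace ℝ (Fin N) → ℝ)
    (hsupp : ∀ i, Function.support (u i) ⊆ Metric.closedBall (x i) R₀) :
    ∀ y, ∃ i j, ∀ k, u k y ≠ 0 → k = i ∨ k = j := by
  intro y
  by_cases h1 : ∃ i, u i y ≠ 0
  · obtain ⟨i, hi⟩ := h1
    by_cases h2 : ∃ j, j ≠ i ∧ u j y ≠ 0
    · obtain ⟨j, hji, hj⟩ := h2
      refine ⟨i, j, fun k hk => ?_⟩
      by_contra hc
      push_neg at hc
      obtain ⟨hki, hkj⟩ := hc
      -- three distinct indices i, j, k with y near all three centers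
      have hyi : dist y (x i) ≤ R₀ := (hsupp i hi)
      have hyj : dist y (x j) ≤ R₀ := (hsupp j hj)
      have hyk : dist y (x k) ≤ R₀ := (hsupp k hk)
      have dij := hsep i j (Ne.symm hji)
      have djk := hsep j k (fun h => hkj h.symm)
      have dik := hsep i k (fun h => hki h.symm)
      have hR0 : 0 ≤ R₀ := le_trans dist_nonneg hyi
      have key := three_pt_aux (x i - y) (x j - y) (x k - y)
      have e1 : x i - y - (x j - y) = x i - x j := by abel
      have e2 : x j - y - (x k - y) = x j - x k := by abel
      have e3 : x i - y - (x k - y) = x i - x k := by abel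
      rw [e1, e2, e3] at key
      have nij : dist (x i) (x j) = ‖x i - x j‖ := dist_eq_norm _ _
      have njk : dist (x j) (x k) = ‖x j - x k‖ := dist_eq_norm _ _
      have nik : dist (x i) (x k) = ‖x i - x k‖ := dist_eq_norm _ _
      have ni : ‖x i - y‖ ≤ R₀ := by rw [← dist_eq_norm, dist_comm]; exact hyi
      have nj : ‖x j - y‖ ≤ R₀ := by rw [← dist_eq_norm, dist_comm]; exact hyj
      have nk : ‖x k - y‖ ≤ R₀ := by rw [← dist_eq_norm, dist_comm]; exact hyk
      have h2ρ : (0:ℝ) ≤ 2*ρ := by linarith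
      have sqij : (2*ρ)^2 < ‖x i - x j‖^2 :=
        pow_lt_pow_left₀ (nij ▸ dij) h2ρ (by norm_num)
      have sqjk : (2*ρ)^2 < ‖x j - x k‖^2 :=
        pow_lt_pow_left₀ (njk ▸ djk) h2ρ (by norm_num)
      have sqik : (2*ρ)^2 < ‖x i - x k‖^2 :=
        pow_lt_pow_left₀ (nik ▸ dik) h2ρ (by norm_num)
      have sqi : ‖x i - y‖^2 ≤ R₀^2 := pow_le_pow_left₀ (norm_nonneg _) ni 2
      have sqj : ‖x j - y‖^2 ≤ R₀^2 := pow_le_pow_left₀ (norm_nonneg _) nj 2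
      have sqk : ‖x k - y‖^2 ≤ R₀^2 := pow_le_pow_left₀ (norm_nonneg _) nk 2
      -- so 12 ρ² < 9 R₀², i.e. R₀ > 2ρ/√3
      have hsq3 : Real.sqrt 3 ^ 2 = 3 := Real.sq_sqrt (by norm_num)
      have hs3pos : 0 < Real.sqrt 3 := Real.sqrt_pos.mpr (by norm_num)
      have hpos : 0 < 2 / Real.sqrt 3 * ρ := by positivity
      have hR0sq : R₀^2 < (2 / Real.sqrt 3 * ρ)^2 := by
        apply sq_lt_sq' (by linarith) hlt
      have heq : (2 / Real.sqrt 3 * ρ)^2 = 4/3 * ρ^2 := by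
        rw [mul_pow, div_pow, hsq3]; norm_num
      rw [heq] at hR0sq
      nlinarith [key, sqij, sqjk, sqik, sqi, sqj, sqk, hR0sq]
    · push_neg at h2
      exact ⟨i, i, fun k hk => Or.inl (by_contra fun h => hk (h2 k h))⟩
  · push_neg at h1
    exact ⟨0, 0, fun k hk => absurd (h1 k) hk⟩
end

section
/- Let q ∈ (1,2), and let w₁, w₂ : ℝ^N → [0,∞) be supported in closed balls B̄(y₁,R*), B̄(y₂,R*) with |y₁ − y₂| ≥ 2R* − σ for small σ > 0, each bounded by C(R* − |x − y_i|)^{2/(2−q)} on its support. Then the function h = (w₁ + w₂)^{q−1} − w₁^{q−1} − w₂^{q−1} is supported in B̄(y₁,R*) ∩ B̄(y₂,R*) and satisfies ‖h‖_∞ ≤ C'·σ^{2(q−1)/(2−q)}. -/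
lemma real_rpow_add_le_add_rpow {p a b : ℝ} (ha : 0 ≤ a) (hb : 0 ≤ b)
    (hp : 0 ≤ p) (hp1 : p ≤ 1) : (a + b) ^ p ≤ a ^ p + b ^ p := by
  have := NNReal.rpow_add_le_add_rpow (a.toNNReal) (b.toNNReal) hp hp1
  rw [← Real.toNNReal_add ha hb] at this
  have h := NNReal.coe_le_coe.2 this
  rwa [NNReal.coe_add, NNReal.coe_rpow, NNReal.coe_rpow, NNReal.coe_rpow,
    Real.coe_toNNReal _ (add_nonneg ha hb), Real.coe_toNNReal _ ha,
    Real.coe_toNNReal _ hb] at h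

lemma key_abs {p a b : ℝ} (ha : 0 ≤ a) (hb : 0 ≤ b) (hp : 0 ≤ p) (hp1 : p ≤ 1) :
    |(a + b) ^ p - a ^ p - b ^ p| ≤ a ^ p := by
  rw [abs_le]
  constructor
  · have h1 : b ^ p ≤ (a + b) ^ p :=
      Real.rpow_le_rpow hb (le_add_of_nonneg_left ha) hp
    linarith
  · have h2 : (a + b) ^ p ≤ a ^ p + b ^ p := real_rpow_add_le_add_rpow ha hb hp hp1
    have h3 : 0 ≤ a ^ p := Real.rpow_nonneg ha p
    linarith

theorem stmt_9 (N : ℕ) (hN : 1 ≤ N) (q Rs C : ℝ) (hq1 : 1 < q) (hq2 : q < 2)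
    (hRs : 0 < Rs) (hC : 0 < C) :
    ∃ C' > 0, ∀ σ : ℝ, 0 < σ → σ ≤ Rs →
      ∀ y₁ y₂ : EuclideanSpace ℝ (Fin N), 2 * Rs - σ ≤ dist y₁ y₂ →
      ∀ w₁ w₂ : EuclideanSpace ℝ (Fin N) → ℝ,
        (∀ x, 0 ≤ w₁ x) → (∀ x, 0 ≤ w₂ x) →
        Function.support w₁ ⊆ Metric.closedBall y₁ Rs →
        Function.support w₂ ⊆ Metric.closedBall y₂ Rs →
        (∀ x ∈ Metric.closedBall y₁ Rs, w₁ x ≤ C * (Rs - dist x y₁) ^ (2/(2-q))) →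
        (∀ x ∈ Metric.closedBall y₂ Rs, w₂ x ≤ C * (Rs - dist x y₂) ^ (2/(2-q))) →
        (Function.support (fun x => (w₁ x + w₂ x) ^ (q-1) - w₁ x ^ (q-1) - w₂ x ^ (q-1))
            ⊆ Metric.closedBall y₁ Rs ∩ Metric.closedBall y₂ Rs) ∧
        ∀ x, |(w₁ x + w₂ x) ^ (q-1) - w₁ x ^ (q-1) - w₂ x ^ (q-1)|
            ≤ C' * σ ^ (2*(q-1)/(2-q)) := by
  have hp0 : (0:ℝ) < q - 1 := by linarith
  have hp1 : q - 1 ≤ 1 := by linarith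
  have h2q : (0:ℝ) < 2 - q := by linarith
  refine ⟨C ^ (q-1), Real.rpow_pos_of_pos hC _, ?_⟩
  intro σ hσ hσR y₁ y₂ hdist w₁ w₂ hw₁0 hw₂0 hs₁ hs₂ hb₁ hb₂
  have hsupp : Function.support (fun x => (w₁ x + w₂ x) ^ (q-1) - w₁ x ^ (q-1) - w₂ x ^ (q-1))
      ⊆ Metric.closedBall y₁ Rs ∩ Metric.closedBall y₂ Rs := by
    intro x hx
    by_contra hxn
    apply hx
    simp only [Set.mem_inter_iff, not_and_or] at hxn
    rcases hxn with h | h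
    · have h1 : w₁ x = 0 := by
        by_contra h1; exact h (hs₁ h1)
      simp [h1, Real.zero_rpow (ne_of_gt hp0)]
    · have h2 : w₂ x = 0 := by
        by_contra h2; exact h (hs₂ h2)
      simp [h2, Real.zero_rpow (ne_of_gt hp0)]
  refine ⟨hsupp, ?_⟩
  intro x
  by_cases hx : x ∈ Metric.closedBall y₁ Rs ∩ Metric.closedBall y₂ Rs
  · obtain ⟨hx1, hx2⟩ := hx
    -- w₁ x ≤ C * σ ^ (2/(2-q))
    have hd : Rs - dist x y₁ ≤ σ := by
      have htr : dist y₁ y₂ ≤ dist x y₁ + dist x y₂ := by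
        rw [dist_comm x y₁]; exact dist_triangle _ _ _
      have : dist x y₂ ≤ Rs := Metric.mem_closedBall.1 hx2
      linarith
    have hdn : 0 ≤ Rs - dist x y₁ := by
      have := Metric.mem_closedBall.1 hx1; linarith
    have hw1 : w₁ x ≤ C * σ ^ (2/(2-q)) := by
      refine (hb₁ x hx1).trans ?_
      gcongr
    have habs := key_abs (hw₁0 x) (hw₂0 x) hp0.le hp1
    refine habs.trans ?_
    have h1 : w₁ x ^ (q-1) ≤ (C * σ ^ (2/(2-q))) ^ (q-1) :=
      Real.rpow_le_rpow (hw₁0 x) hw1 hp0.le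
    refine h1.trans_eq ?_
    rw [Real.mul_rpow hC.le (by positivity), ← Real.rpow_mul hσ.le]
    congr 1
    ring
  · have h0 : (w₁ x + w₂ x) ^ (q-1) - w₁ x ^ (q-1) - w₂ x ^ (q-1) = 0 := by
      by_contra h
      exact hx (hsupp h)
    rw [h0, abs_zero]
    positivity
end
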